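/- The orthogonal-complement operation is contravariantly functorial on linear relations over F2: for all finite-dimensional linear relations, i.e. linear subspaces R ⊆ F2^n × F2^m and S ⊆ F2^m × F2^ℓ, (S ∘ R)^⊥ = S^⊥ ∘ R^⊥, where for a relation T ⊆ F2^a × F2^b we define T^⊥ = {(x,z) : ∀ (y,w) ∈ T, ⟨x,y⟩ + ⟨z,w⟩ = 0} (relative to the standard bilinear form). -/

import Mathlib

open Finset

/-- Set-level relational composition: `relComp A B = B ∘ A`. -/
def relComp {X Y Z : Type*} (A : Set (X × Y)) (B : Set (Y × Z)) : Set (X × Z) :=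
  {p | ∃ y : Y, (p.1, y) ∈ A ∧ (y, p.2) ∈ B}

/-- The twisted orthogonal complement of a relation
`T ⊆ F2^a × F2^b`: pairs `(x,z)` with `⟨x,y⟩ = ⟨z,w⟩` for all `(y,w) ∈ T`. -/
def relOrth {a b : ℕ} (T : Set ((Fin a → ZMod 2) × (Fin b → ZMod 2))) :
    Set ((Fin a → ZMod 2) × (Fin b → ZMod 2)) :=
  {p | ∀ q ∈ T, (∑ i, p.1 i * q.1 i) = (∑ i, p.2 i * q.2 i)}

/-- The dot-product linear functional `u ↦ ⟨x, u⟩`. -/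
def dotL {k : ℕ} (x : Fin k → ZMod 2) : (Fin k → ZMod 2) →ₗ[ZMod 2] ZMod 2 where
  toFun u := ∑ i, x i * u i
  map_add' u v := by simp [mul_add, Finset.sum_add_distrib]
  map_smul' c u := by simp [Finset.mul_sum, mul_left_comm]

/-- The orthogonal complement is contravariantly functorial on linear relations
over `F2`: `(S ∘ R)^⊥ = S^⊥ ∘ R^⊥`. -/
theorem stmt_15 (n m ℓ : ℕ)
    (R : Submodule (ZMod 2) ((Fin n → ZMod 2) × (Fin m → ZMod 2)))
    (S : Submodule (ZMod 2) ((Fin m → ZMod 2) × (Fin ℓ → ZMod 2))) :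
    relOrth (relComp (R : Set ((Fin n → ZMod 2) × (Fin m → ZMod 2)))
                     (S : Set ((Fin m → ZMod 2) × (Fin ℓ → ZMod 2)))) =
      relComp (relOrth (R : Set ((Fin n → ZMod 2) × (Fin m → ZMod 2))))
              (relOrth (S : Set ((Fin m → ZMod 2) × (Fin ℓ → ZMod 2)))) := by
  ext ⟨x, z⟩
  constructor
  · -- hard direction
    intro h
    -- h : ∀ q ∈ relComp R S, ⟨x,q.1⟩ = ⟨z,q.2⟩
    simp only [relOrth, Set.mem_setOf_eq] at h
    -- build the subspace Q of (Fin m → ZMod 2) × ZMod 2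
    set f1 : ((Fin n → ZMod 2) × (Fin m → ZMod 2)) →ₗ[ZMod 2]
        ((Fin m → ZMod 2) × ZMod 2) :=
      (LinearMap.snd _ _ _).prod ((dotL x).comp (LinearMap.fst _ _ _)) with hf1
    set f2 : ((Fin m → ZMod 2) × (Fin ℓ → ZMod 2)) →ₗ[ZMod 2]
        ((Fin m → ZMod 2) × ZMod 2) :=
      (LinearMap.fst _ _ _).prod ((dotL z).comp (LinearMap.snd _ _ _)) with hf2
    set Q : Submodule (ZMod 2) ((Fin m → ZMod 2) × ZMod 2) :=
      R.map f1 ⊔ S.map f2 with hQ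
    have h01 : ((0 : Fin m → ZMod 2), (1 : ZMod 2)) ∉ Q := by
      intro hmem
      rw [hQ, Submodule.mem_sup] at hmem
      obtain ⟨a, ha, b, hb, hab⟩ := hmem
      obtain ⟨⟨u, v⟩, huv, rfl⟩ := ha
      obtain ⟨⟨v', w⟩, hvw, rfl⟩ := hb
      simp only [hf1, hf2, LinearMap.prod_apply, Function.prod, LinearMap.coe_comp,
        Function.comp_apply, LinearMap.fst_apply, LinearMap.snd_apply, Prod.mk_add_mk,
        Prod.mk.injEq] at hab
      obtain ⟨hv, hc⟩ := hab
      -- v + v' = 0 so v' = v (char 2); then (u, w) ∈ relComp R S via -v'...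
      have hv' : v = -v' := by
        rw [eq_neg_iff_add_eq_zero]; exact hv
      have hR' : ((-u, v') : (Fin n → ZMod 2) × (Fin m → ZMod 2)) ∈ R := by
        have := R.neg_mem huv
        rwa [Prod.neg_mk, hv', neg_neg] at this
      have hcomp : ((-u, w) : (Fin n → ZMod 2) × (Fin ℓ → ZMod 2)) ∈
          relComp (R : Set _) (S : Set _) := ⟨v', hR', hvw⟩
      have := h _ hcomp
      simp only at this
      simp only [dotL, LinearMap.coe_mk, AddHom.coe_mk] at hc
      have hsum : (∑ i, x i * u i) + (∑ i, z i * w i) = 0 := by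
        have hneg : (∑ i, x i * (-u) i) = -∑ i, x i * u i := by
          simp
        rw [hneg] at this
        rw [← this]; ring
      rw [hsum] at hc
      exact one_ne_zero hc.symm
    obtain ⟨φ, hφ1, hφQ⟩ := Q.exists_dual_map_eq_bot_of_notMem h01 inferInstance
    have hφzero : ∀ p ∈ Q, φ p = 0 := by
      intro p hp
      have : φ p ∈ Q.map φ := Submodule.mem_map_of_mem hp
      rwa [hφQ, Submodule.mem_bot] at this
    have hφ01 : φ (0, 1) = 1 := by
      revert hφ1
      generalize φ (0, 1) = c
      revert c; decide
    set y : Fin m → ZMod 2 := fun i => φ ((fun j => if i = j then 1 else 0), 0) with hy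
    have hψ : ∀ v : Fin m → ZMod 2, φ (v, 0) = ∑ i, y i * v i := by
      intro v
      have := LinearMap.pi_apply_eq_sum_univ
        (φ ∘ₗ LinearMap.inl (ZMod 2) (Fin m → ZMod 2) (ZMod 2)) v
      simp only [LinearMap.coe_comp, Function.comp_apply, LinearMap.inl_apply,
        smul_eq_mul] at this
      rw [this]
      exact Finset.sum_congr rfl fun i _ => mul_comm _ _
    have key : ∀ (v : Fin m → ZMod 2) (c : ZMod 2), (v, c) ∈ Q → ∑ i, y i * v i = c := by
      intro v c hmem
      have h0 := hφzero (v, c) hmem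
      have hsplit : ((v, c) : (Fin m → ZMod 2) × ZMod 2) = (v, 0) + c • (0, 1) := by
        simp [Prod.ext_iff]
      rw [hsplit, map_add, map_smul, hφ01, hψ, smul_eq_mul, mul_one] at h0
      have := eq_neg_of_add_eq_zero_left h0
      rwa [CharTwo.neg_eq] at this
    refine ⟨y, ?_, ?_⟩
    · intro q hq
      have hmem : ((q.2, (dotL x) q.1) : (Fin m → ZMod 2) × ZMod 2) ∈ Q :=
        Submodule.mem_sup_left (Submodule.mem_map_of_mem hq)
      have := key q.2 ((dotL x) q.1) hmem
      simp only [dotL, LinearMap.coe_mk, AddHom.coe_mk] at this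
      exact this.symm
    · intro q hq
      have hmem : ((q.1, (dotL z) q.2) : (Fin m → ZMod 2) × ZMod 2) ∈ Q :=
        Submodule.mem_sup_right (Submodule.mem_map_of_mem hq)
      have := key q.1 ((dotL z) q.2) hmem
      simp only [dotL, LinearMap.coe_mk, AddHom.coe_mk] at this
      exact this
  · -- easy direction
    rintro ⟨y, hR, hS⟩ ⟨u, w⟩ ⟨v, huv, hvw⟩
    exact (hR (u, v) huv).trans (hS (v, w) hvw)
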